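/- arXiv:1706.04923 — 4 statements merged into one kernel-verified Lean document; each statement's English description precedes it below -/
import Mathlib

section
/- Let M be a finite free ℤ-module with an alternating ℤ-bilinear form ⟨·,·⟩, and let v₁, v₂, v₃, v₄ ∈ M satisfy ⟨v₁,v₂⟩ = 0, ⟨v₁,v₃⟩ = 0, ⟨v₁,v₄⟩ = 1, ⟨v₂,v₃⟩ = 1, ⟨v₂,v₄⟩ = 1, ⟨v₃,v₄⟩ = 1. Then the squares T_{v₁+v₂}², T_{v₁−v₂}², T_{v₁+v₃}², T_{v₁−v₃}² all belong to the subgroup of ℤ-linear automorphisms of M generated by T_{v₁}, T_{v₂}, T_{v₃}, T_{v₄}. -/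
/-- The symplectic transvection along `v` for the alternating bilinear form `B`:
`u ↦ u + ⟨v, u⟩ • v`, with inverse `u ↦ u - ⟨v, u⟩ • v`. -/
def symplecticTransvection {M : Type*} [AddCommGroup M]
    (B : M →ₗ[ℤ] M →ₗ[ℤ] ℤ) (hB : ∀ x, B x x = 0) (v : M) : M ≃ₗ[ℤ] M where
  toFun u := u + B v u • v
  invFun u := u - B v u • v
  map_add' u w := by
    show (u + w) + B v (u + w) • v = (u + B v u • v) + (w + B v w • v)
    rw [map_add, add_smul]; abel
  map_smul' c u := by
    show c • u + B v (c • u) • v = c • (u + B v u • v)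
    rw [LinearMap.map_smul, smul_assoc, smul_add]
  left_inv u := by
    show (u + B v u • v) - B v (u + B v u • v) • v = u
    rw [map_add, LinearMap.map_smul, hB, smul_zero, add_zero, add_sub_cancel_right]
  right_inv u := by
    show (u - B v u • v) + B v (u - B v u • v) • v = u
    rw [map_sub, LinearMap.map_smul, hB, smul_zero, sub_zero, sub_add_cancel]

section Aux
variable {M : Type*} [AddCommGroup M] (B : M →ₗ[ℤ] M →ₗ[ℤ] ℤ) (hB : ∀ x, B x x = 0)

lemma st_mul_apply (f g : M ≃ₗ[ℤ] M) (u : M) : (f * g) u = f (g u) := rfl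

lemma st_apply (v u : M) : symplecticTransvection B hB v u = u + B v u • v := rfl

lemma st_inv_apply (v u : M) : (symplecticTransvection B hB v)⁻¹ u = u - B v u • v := rfl

lemma B_skew (hB : ∀ x, B x x = 0) (x y : M) : B y x = - B x y := by
  have h := hB (x + y)
  simp only [map_add, LinearMap.add_apply, hB] at h
  linarith

lemma aux_p (a b c : M) (hab : B a b = 0) (hac : B a c = 1) (hbc : B b c = 1) :
    (symplecticTransvection B hB (a + b)) ^ 2 =
      (symplecticTransvection B hB c)⁻¹ * (symplecticTransvection B hB a)⁻¹ *
      (symplecticTransvection B hB b)⁻¹ * (symplecticTransvection B hB c)⁻¹ *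
      (symplecticTransvection B hB c)⁻¹ * (symplecticTransvection B hB b)⁻¹ *
      (symplecticTransvection B hB a)⁻¹ * (symplecticTransvection B hB c)⁻¹ *
      (symplecticTransvection B hB b) * (symplecticTransvection B hB b) *
      (symplecticTransvection B hB a) * (symplecticTransvection B hB a) := by
  have hba : B b a = 0 := by rw [B_skew B hB, hab]; ring
  have hca : B c a = -1 := by rw [B_skew B hB, hac]
  have hcb : B c b = -1 := by rw [B_skew B hB, hbc]
  refine DFunLike.ext _ _ fun u => ?_
  simp only [pow_two, st_mul_apply, st_apply, st_inv_apply, map_add, map_sub,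
    LinearMap.add_apply, LinearMap.sub_apply, map_smul, LinearMap.smul_apply, smul_eq_mul,
    hab, hac, hbc, hba, hca, hcb, hB]
  module

lemma aux_m (a b c : M) (hab : B a b = 0) (hac : B a c = 1) (hbc : B b c = 1) :
    (symplecticTransvection B hB (a - b)) ^ 2 =
      (symplecticTransvection B hB c) * (symplecticTransvection B hB a) *
      (symplecticTransvection B hB b)⁻¹ * (symplecticTransvection B hB c)⁻¹ *
      (symplecticTransvection B hB c)⁻¹ * (symplecticTransvection B hB b)⁻¹ *
      (symplecticTransvection B hB a) * (symplecticTransvection B hB c) *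
      (symplecticTransvection B hB b) * (symplecticTransvection B hB b) *
      (symplecticTransvection B hB a)⁻¹ * (symplecticTransvection B hB a)⁻¹ := by
  have hba : B b a = 0 := by rw [B_skew B hB, hab]; ring
  have hca : B c a = -1 := by rw [B_skew B hB, hac]
  have hcb : B c b = -1 := by rw [B_skew B hB, hbc]
  refine DFunLike.ext _ _ fun u => ?_
  simp only [pow_two, st_mul_apply, st_apply, st_inv_apply, map_add, map_sub,
    LinearMap.add_apply, LinearMap.sub_apply, map_smul, LinearMap.smul_apply, smul_eq_mul,
    hab, hac, hbc, hba, hca, hcb, hB]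
  module

end Aux

/-- Lemma 2.4 of the paper. -/
theorem statement1 {M : Type*} [AddCommGroup M] [Module.Free ℤ M] [Module.Finite ℤ M]
    (B : M →ₗ[ℤ] M →ₗ[ℤ] ℤ) (hB : ∀ x, B x x = 0) (v₁ v₂ v₃ v₄ : M)
    (h12 : B v₁ v₂ = 0) (h13 : B v₁ v₃ = 0) (h14 : B v₁ v₄ = 1)
    (h23 : B v₂ v₃ = 1) (h24 : B v₂ v₄ = 1) (h34 : B v₃ v₄ = 1) :
    (symplecticTransvection B hB (v₁ + v₂)) ^ 2 ∈
      Subgroup.closure {symplecticTransvection B hB v₁, symplecticTransvection B hB v₂,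
        symplecticTransvection B hB v₃, symplecticTransvection B hB v₄} ∧
    (symplecticTransvection B hB (v₁ - v₂)) ^ 2 ∈
      Subgroup.closure {symplecticTransvection B hB v₁, symplecticTransvection B hB v₂,
        symplecticTransvection B hB v₃, symplecticTransvection B hB v₄} ∧
    (symplecticTransvection B hB (v₁ + v₃)) ^ 2 ∈
      Subgroup.closure {symplecticTransvection B hB v₁, symplecticTransvection B hB v₂,
        symplecticTransvection B hB v₃, symplecticTransvection B hB v₄} ∧
    (symplecticTransvection B hB (v₁ - v₃)) ^ 2 ∈
      Subgroup.closure {symplecticTransvection B hB v₁, symplecticTransvection B hB v₂,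
        symplecticTransvection B hB v₃, symplecticTransvection B hB v₄} := by
  refine ⟨?_, ?_, ?_, ?_⟩
  · rw [aux_p B hB v₁ v₂ v₄ h12 h14 h24]
    repeat' first | apply mul_mem | apply inv_mem
    all_goals exact Subgroup.subset_closure (by simp)
  · rw [aux_m B hB v₁ v₂ v₄ h12 h14 h24]
    repeat' first | apply mul_mem | apply inv_mem
    all_goals exact Subgroup.subset_closure (by simp)
  · rw [aux_p B hB v₁ v₃ v₄ h13 h14 h34]
    repeat' first | apply mul_mem | apply inv_mem
    all_goals exact Subgroup.subset_closure (by simp)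
  · rw [aux_m B hB v₁ v₃ v₄ h13 h14 h34]
    repeat' first | apply mul_mem | apply inv_mem
    all_goals exact Subgroup.subset_closure (by simp)
end

section
/- Let d ≥ 2, let Ω be a d×d antisymmetric integer matrix with zero diagonal, and let l ≠ w be indices with Ω_{lw} odd. Set B = Id + E_{lw}, where E_{lw} is the matrix whose only nonzero entry is a 1 in position (l,w), and set Ω' = B Ω Bᵀ. Then for every row vector u ∈ (ℤ/2ℤ)^d one has Q_{Ω'}(u) = Q_Ω(u·B̄), where B̄ is the mod-2 reduction of B. -/
open Matrix

/-- The quadratic form `Q_Ω(u) = Σ_{α<β} u_α Ω̄_{αβ} u_β + Σ_α u_α` on row vectors in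
`(ℤ/2ℤ)^d`, where `Ω̄` is the mod-2 reduction of the antisymmetric integer matrix `Ω`. -/
def Qform {d : ℕ} (Ω : Matrix (Fin d) (Fin d) ℤ) (u : Fin d → ZMod 2) : ZMod 2 :=
  (∑ a : Fin d, ∑ b : Fin d, if a < b then u a * ((Ω a b : ℤ) : ZMod 2) * u b else 0)
    + ∑ a : Fin d, u a

section AuxZMod2

lemma statement4_two_torsion : ∀ x : ZMod 2, x + x = 0 := by decide

lemma statement4_mul_self : ∀ x : ZMod 2, x * x = x := by decide

lemma statement4_neg : ∀ x : ZMod 2, -x = x := by decide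

lemma statement4_sum_lt_add_gt {d : ℕ} (l : Fin d) (g : Fin d → ZMod 2) :
    ((∑ a : Fin d, if l < a then g a else 0) + ∑ a : Fin d, if a < l then g a else 0)
      = (∑ a : Fin d, g a) + g l := by
  rw [← Finset.sum_add_distrib]
  have h : ∀ a : Fin d, ((if l < a then g a else 0) + (if a < l then g a else 0))
      = g a + (if a = l then g a else 0) := by
    intro a
    rcases lt_trichotomy a l with h | h | h
    · simp [h, h.ne, not_lt.mpr h.le]
    · subst h; simp [statement4_two_torsion]
    · simp [h, h.ne', not_lt.mpr h.le]
  rw [Finset.sum_congr rfl fun a _ => h a, Finset.sum_add_distrib,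
    Finset.sum_ite_eq' Finset.univ l g]
  simp

lemma statement4_collapse1 {d : ℕ} (l : Fin d) (f : Fin d → ZMod 2) :
    (∑ a : Fin d, ∑ b : Fin d, if a < b then (if a = l then f b else 0) else 0)
      = ∑ b : Fin d, if l < b then f b else 0 := by
  have h : ∀ a b : Fin d, (if a < b then (if a = l then f b else 0) else 0)
      = if a = l then (if l < b then f b else 0) else 0 := by
    intro a b
    rcases eq_or_ne a l with rfl | h
    · simp
    · simp [h]
  simp_rw [h, Finset.sum_ite_irrel, Finset.sum_const_zero,
    Finset.sum_ite_eq' Finset.univ l]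
  simp

lemma statement4_collapse2 {d : ℕ} (l : Fin d) (f : Fin d → ZMod 2) :
    (∑ a : Fin d, ∑ b : Fin d, if a < b then (if b = l then f a else 0) else 0)
      = ∑ a : Fin d, if a < l then f a else 0 := by
  have h : ∀ a b : Fin d, (if a < b then (if b = l then f a else 0) else 0)
      = if b = l then (if a < l then f a else 0) else 0 := by
    intro a b
    rcases eq_or_ne b l with rfl | h
    · simp
    · simp [h]
  simp_rw [h, Finset.sum_ite_eq' Finset.univ l]
  simp

/-- Core computation over `ZMod 2`. -/
lemma statement4_key {d : ℕ} (M Ω' : Matrix (Fin d) (Fin d) (ZMod 2))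
    (hsym : ∀ a b, M b a = M a b) (hdg : ∀ a, M a a = 0)
    (l w : Fin d) (hM : M l w = 1)
    (u v : Fin d → ZMod 2)
    (hv : ∀ a, v a = u a + if a = w then u l else 0)
    (hΩ' : ∀ a b, Ω' a b = M a b + (if a = l then M w b else 0)
      + (if b = l then M a w else 0) + (if a = l ∧ b = l then M w w else 0)) :
    ((∑ a : Fin d, ∑ b : Fin d, if a < b then u a * Ω' a b * u b else 0) + ∑ a : Fin d, u a)
      = (∑ a : Fin d, ∑ b : Fin d, if a < b then v a * M a b * v b else 0)
        + ∑ a : Fin d, v a := by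
  have hL : ∀ a b : Fin d, (if a < b then u a * Ω' a b * u b else 0)
      = (if a < b then u a * M a b * u b else 0)
        + (if a < b then (if a = l then u l * M b w * u b else 0) else 0)
        + (if a < b then (if b = l then u l * M a w * u a else 0) else 0) := by
    intro a b
    by_cases hab : a < b
    · simp only [if_pos hab, hΩ' a b]
      by_cases ha : a = l <;> by_cases hb : b = l
      · rw [ha, hb] at hab; exact absurd hab (lt_irrefl _)
      · simp only [ha, hb, if_pos rfl, if_neg, and_false, if_false, ite_false,
          eq_self_iff_true, if_true, true_and]
        rw [hsym b w]; ring
      · simp only [ha, hb, if_neg, if_pos rfl, false_and, if_false, ite_false,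
          eq_self_iff_true, if_true, and_true, ite_true]
        ring
      · simp only [ha, hb, if_neg, false_and, ite_false]
        ring
    · simp [hab]
  have hR : ∀ a b : Fin d, (if a < b then v a * M a b * v b else 0)
      = (if a < b then u a * M a b * u b else 0)
        + (if a < b then (if a = w then u l * M b w * u b else 0) else 0)
        + (if a < b then (if b = w then u l * M a w * u a else 0) else 0) := by
    intro a b
    by_cases hab : a < b
    · simp only [if_pos hab, hv a, hv b]
      by_cases ha : a = w <;> by_cases hb : b = w
      · rw [ha, hb] at hab; exact absurd hab (lt_irrefl _)
      · simp only [ha, hb, eq_self_iff_true, if_true, ite_true, if_false, ite_false]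
        rw [hsym b w]; ring
      · simp only [ha, hb, eq_self_iff_true, if_true, ite_true, if_false, ite_false]
        ring
      · simp only [ha, hb, if_false, ite_false]
        ring
    · simp [hab]
  have hlin : (∑ a : Fin d, v a) = (∑ a : Fin d, u a) + u l := by
    simp_rw [hv]
    rw [Finset.sum_add_distrib, Finset.sum_ite_eq' Finset.univ w (fun _ => u l)]
    simp
  simp_rw [hL, hR, Finset.sum_add_distrib]
  rw [statement4_collapse1 l (fun c => u l * M c w * u c),
    statement4_collapse2 l (fun c => u l * M c w * u c),
    statement4_collapse1 w (fun c => u l * M c w * u c),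
    statement4_collapse2 w (fun c => u l * M c w * u c), hlin]
  have h1 := statement4_sum_lt_add_gt l (fun c => u l * M c w * u c)
  have h2 := statement4_sum_lt_add_gt w (fun c => u l * M c w * u c)
  simp only [hM, hdg w, mul_one, mul_zero, zero_mul] at h1 h2
  rw [statement4_mul_self] at h1
  linear_combination h1 - h2

variable {d : ℕ} (Ω : Matrix (Fin d) (Fin d) ℤ) (l w : Fin d)

lemma statement4_EmulL (a b : Fin d) :
    (Matrix.single l w (1:ℤ) * Ω) a b = if a = l then Ω w b else 0 := by
  rcases eq_or_ne a l with rfl | h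
  · simp
  · simp [h]

lemma statement4_Etr : (Matrix.single l w (1:ℤ))ᵀ = Matrix.single w l 1 := by
  ext a b
  simp [Matrix.single, and_comm]

lemma statement4_EmulR (N : Matrix (Fin d) (Fin d) ℤ) (a b : Fin d) :
    (N * (Matrix.single l w (1:ℤ))ᵀ) a b = if b = l then N a w else 0 := by
  rw [statement4_Etr]
  rcases eq_or_ne b l with rfl | h
  · simp
  · simp [h]

lemma statement4_entry (a b : Fin d) :
    (((1 : Matrix (Fin d) (Fin d) ℤ) + Matrix.single l w (1:ℤ)) * Ω *
        ((1 : Matrix (Fin d) (Fin d) ℤ) + Matrix.single l w (1:ℤ))ᵀ) a b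
      = Ω a b + (if a = l then Ω w b else 0) + (if b = l then Ω a w else 0)
        + (if a = l ∧ b = l then Ω w w else 0) := by
  have expand : ((1 : Matrix (Fin d) (Fin d) ℤ) + Matrix.single l w (1:ℤ)) * Ω *
      ((1 : Matrix (Fin d) (Fin d) ℤ) + Matrix.single l w (1:ℤ))ᵀ
      = Ω + Matrix.single l w (1:ℤ) * Ω + Ω * (Matrix.single l w (1:ℤ))ᵀ
        + Matrix.single l w (1:ℤ) * Ω * (Matrix.single l w (1:ℤ))ᵀ := by
    rw [transpose_add, transpose_one]
    noncomm_ring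
  rw [expand]
  simp only [Matrix.add_apply, statement4_EmulL, statement4_EmulR]
  by_cases ha : a = l <;> by_cases hb : b = l <;> simp [ha, hb]

lemma statement4_Bcast : (1 + Matrix.single l w (1:ℤ)).map (Int.cast : ℤ → ZMod 2)
    = 1 + Matrix.single l w (1 : ZMod 2) := by
  ext a b
  simp only [Matrix.map_apply, Matrix.add_apply, Int.cast_add]
  congr 1
  · simp [Matrix.one_apply, apply_ite (Int.cast : ℤ → ZMod 2)]
  · simp [Matrix.single, apply_ite (Int.cast : ℤ → ZMod 2)]

lemma statement4_hvec (u : Fin d → ZMod 2) (a : Fin d) :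
    Matrix.vecMul u ((1 + Matrix.single l w (1:ℤ)).map (Int.cast : ℤ → ZMod 2)) a
      = u a + if a = w then u l else 0 := by
  rw [statement4_Bcast l w, Matrix.vecMul_add, Matrix.vecMul_one, Pi.add_apply]
  congr 1
  simp only [Matrix.vecMul, dotProduct, Matrix.single, Matrix.of_apply, mul_ite, mul_one,
    mul_zero, ite_and]
  rw [Finset.sum_ite_eq Finset.univ l]
  simp [eq_comm]

end AuxZMod2

/-- Lemma 2.7 of the paper: the Kontsevich–Zorich matrix `B = Id + E_{lw}` intertwines the
quadratic forms of `Ω' = B Ω Bᵀ` and `Ω`: `Q_{Ω'}(u) = Q_Ω(u·B̄)` for every row vector `u`. -/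
theorem statement4 (d : ℕ) (hd : 2 ≤ d) (Ω : Matrix (Fin d) (Fin d) ℤ)
    (hskew : Ωᵀ = -Ω) (hdiag : ∀ i, Ω i i = 0)
    (l w : Fin d) (hlw : l ≠ w) (hodd : Odd (Ω l w)) :
    ∀ u : Fin d → ZMod 2,
      Qform ((1 + Matrix.single l w (1 : ℤ)) * Ω *
          (1 + Matrix.single l w (1 : ℤ))ᵀ) u
        = Qform Ω (Matrix.vecMul u
            ((1 + Matrix.single l w (1 : ℤ)).map (Int.cast : ℤ → ZMod 2))) := by
  intro u
  set M : Matrix (Fin d) (Fin d) (ZMod 2) := Ω.map (Int.cast : ℤ → ZMod 2) with hMdef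
  set Ω'i : Matrix (Fin d) (Fin d) ℤ :=
    (1 + Matrix.single l w (1 : ℤ)) * Ω * (1 + Matrix.single l w (1 : ℤ))ᵀ
    with hΩidef
  set Ω' : Matrix (Fin d) (Fin d) (ZMod 2) := Ω'i.map (Int.cast : ℤ → ZMod 2) with hΩdef
  set v : Fin d → ZMod 2 := Matrix.vecMul u
    ((1 + Matrix.single l w (1 : ℤ)).map (Int.cast : ℤ → ZMod 2)) with hvdef
  have hsym : ∀ a b, M b a = M a b := by
    intro a b
    have h : Ω b a = -Ω a b := by
      have := congrFun (congrFun hskew a) b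
      simpa [Matrix.transpose_apply, Matrix.neg_apply] using this
    show ((Ω b a : ℤ) : ZMod 2) = ((Ω a b : ℤ) : ZMod 2)
    rw [h]
    push_cast
    rw [statement4_neg]
  have hdg : ∀ a, M a a = 0 := by
    intro a
    show ((Ω a a : ℤ) : ZMod 2) = 0
    rw [hdiag a]
    simp
  have hM : M l w = 1 := by
    obtain ⟨k, hk⟩ := hodd
    show ((Ω l w : ℤ) : ZMod 2) = 1
    rw [hk]
    push_cast
    rw [show ((2 : ZMod 2)) = 0 by decide]
    ring
  have hv : ∀ a, v a = u a + if a = w then u l else 0 := statement4_hvec l w u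
  have hΩ' : ∀ a b, Ω' a b = M a b + (if a = l then M w b else 0)
      + (if b = l then M a w else 0) + (if a = l ∧ b = l then M w w else 0) := by
    intro a b
    show ((Ω'i a b : ℤ) : ZMod 2) = _
    rw [hΩidef, statement4_entry Ω l w a b]
    push_cast
    rfl
  exact statement4_key M Ω' hsym hdg l w hM u v hv hΩ'
end

section
/- For every g ≥ 3, the following 2g vectors form a symplectic basis of (ℤ^A, ⟨·,·⟩) for the form Ω of the permutation τ^{(g)}: the pairs (e_{3k+2}, e_{3k+3}) for 0 ≤ k ≤ g−2, together with the pair (v*, w*), where v* = e_0 + Σ_{k=0}^{g−2}(−e_{3k+2} + e_{3k+3}) and w* = e_1 + Σ_{k=0}^{g−2}(−e_{3k+2} + e_{3k+3}). That is, these 2g vectors are a ℤ-basis of ℤ^A, within each listed pair the first vector pairs with the second to ⟨·,·⟩-value 1, and any two vectors taken from two distinct pairs pair to 0. -/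
open Matrix

def Aset (g : ℕ) : Finset ℕ :=
  {0, 1} ∪ (Finset.range (g - 1)).biUnion (fun k => {3 * k + 2, 3 * k + 3})

abbrev Idx (g : ℕ) := ↥(Aset g)

def evec (g : ℕ) (m : ℕ) : Idx g → ℤ := fun a => if (a : ℕ) = m then 1 else 0

def pbtau (g : ℕ) (n : ℕ) : ℕ :=
  if n = 0 then 2 * g
  else if n = 1 then 2 * g - 1
  else if n % 3 = 0 then 2 * (n / 3) - 1
  else 2 * ((n - 2) / 3) + 2

def Om (g : ℕ) (pb : ℕ → ℕ) : Matrix (Idx g) (Idx g) ℤ := fun a b =>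
  if (a : ℕ) < (b : ℕ) ∧ pb (b : ℕ) < pb (a : ℕ) then 1
  else if (b : ℕ) < (a : ℕ) ∧ pb (a : ℕ) < pb (b : ℕ) then -1
  else 0

lemma Om_skew (g : ℕ) (pb : ℕ → ℕ) : (Om g pb)ᵀ = -(Om g pb) := by
  ext a b
  simp only [Matrix.transpose_apply, Matrix.neg_apply, Om]
  split_ifs <;> omega

def pairing {g : ℕ} (Ω : Matrix (Idx g) (Idx g) ℤ) (u v : Idx g → ℤ) : ℤ :=
  u ⬝ᵥ Ω.mulVec v

lemma pairing_add {g : ℕ} (Ω : Matrix (Idx g) (Idx g) ℤ) (v u w : Idx g → ℤ) :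
    pairing Ω v (u + w) = pairing Ω v u + pairing Ω v w := by
  unfold pairing; rw [Matrix.mulVec_add, dotProduct_add]

lemma pairing_sub {g : ℕ} (Ω : Matrix (Idx g) (Idx g) ℤ) (v u w : Idx g → ℤ) :
    pairing Ω v (u - w) = pairing Ω v u - pairing Ω v w := by
  unfold pairing; rw [Matrix.mulVec_sub, dotProduct_sub]

lemma pairing_smul {g : ℕ} (Ω : Matrix (Idx g) (Idx g) ℤ) (v : Idx g → ℤ) (c : ℤ)
    (u : Idx g → ℤ) : pairing Ω v (c • u) = c * pairing Ω v u := by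
  unfold pairing; rw [Matrix.mulVec_smul, dotProduct_smul, smul_eq_mul]

lemma pairing_self_zero {g : ℕ} (Ω : Matrix (Idx g) (Idx g) ℤ) (hΩ : Ωᵀ = -Ω)
    (v : Idx g → ℤ) : pairing Ω v v = 0 := by
  have key : pairing Ω v v = -pairing Ω v v := by
    calc pairing Ω v v = ∑ a, ∑ b, v a * (Ω a b * v b) := by
          simp [pairing, dotProduct, Matrix.mulVec, Finset.mul_sum]
    _ = ∑ a, ∑ b, -(v b * (Ω b a * v a)) := by
          refine Finset.sum_congr rfl fun a _ => Finset.sum_congr rfl fun b _ => ?_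
          have h : Ω a b = -Ω b a := by
            have := congrFun (congrFun hΩ.symm a) b
            simp only [Matrix.transpose_apply, Matrix.neg_apply] at this
            omega
          rw [h]; ring
    _ = -∑ b, ∑ a, v b * (Ω b a * v a) := by
          rw [Finset.sum_comm]
          simp
    _ = -pairing Ω v v := by
          simp [pairing, dotProduct, Matrix.mulVec, Finset.mul_sum]
  omega

def transvection {g : ℕ} (Ω : Matrix (Idx g) (Idx g) ℤ) (hΩ : Ωᵀ = -Ω) (v : Idx g → ℤ) :
    (Idx g → ℤ) ≃ₗ[ℤ] (Idx g → ℤ) where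
  toFun u := u + pairing Ω v u • v
  invFun u := u - pairing Ω v u • v
  map_add' u w := by
    show (u + w) + pairing Ω v (u + w) • v = (u + pairing Ω v u • v) + (w + pairing Ω v w • v)
    rw [pairing_add, add_smul]; abel
  map_smul' c u := by
    show c • u + pairing Ω v (c • u) • v = c • (u + pairing Ω v u • v)
    rw [pairing_smul, mul_smul, smul_add]
  left_inv u := by
    show (u + pairing Ω v u • v) - pairing Ω v (u + pairing Ω v u • v) • v = u
    rw [pairing_add, pairing_smul, pairing_self_zero Ω hΩ, mul_zero, add_zero,
      add_sub_cancel_right]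
  right_inv u := by
    show (u - pairing Ω v u • v) + pairing Ω v (u - pairing Ω v u • v) • v = u
    rw [pairing_sub, pairing_smul, pairing_self_zero Ω hΩ, mul_zero, sub_zero,
      sub_add_cancel]

inductive OmegaClosure {M : Type*} [AddCommGroup M] (pair : M → M → ℤ) (V : Set M) : M → Prop
  | base {v : M} : v ∈ V → OmegaClosure pair V v
  | neg {v : M} : OmegaClosure pair V v → OmegaClosure pair V (-v)
  | add {v w : M} : OmegaClosure pair V v → OmegaClosure pair V w → pair v w = 1 →
      OmegaClosure pair V (v + w)
  | sub {v w : M} : OmegaClosure pair V v → OmegaClosure pair V w → pair v w = 1 →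
      OmegaClosure pair V (v - w)

/-- The alternating form of Zorich's permutation `τ^{(g)}`
(top row `0 1 2 3 5 6 … 3g-4 3g-3`, bottom row `3 2 6 5 9 8 … 3g-3 3g-4 1 0`). -/
def OmTau (g : ℕ) : Matrix (Idx g) (Idx g) ℤ := Om g (pbtau g)

lemma OmTau_skew (g : ℕ) : (OmTau g)ᵀ = -(OmTau g) := Om_skew g (pbtau g)

/-- `v* = e_0 + Σ_{k=0}^{g-2} (-e_{3k+2} + e_{3k+3})`. -/
def vstar (g : ℕ) : Idx g → ℤ :=
  evec g 0 + ∑ k ∈ Finset.range (g - 1), (-evec g (3 * k + 2) + evec g (3 * k + 3))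

/-- `w* = e_1 + Σ_{k=0}^{g-2} (-e_{3k+2} + e_{3k+3})`. -/
def wstar (g : ℕ) : Idx g → ℤ :=
  evec g 1 + ∑ k ∈ Finset.range (g - 1), (-evec g (3 * k + 2) + evec g (3 * k + 3))

/-- The symplectic basis of Lemma 3.1: the pairs `(e_{3k+2}, e_{3k+3})` for `0 ≤ k ≤ g-2`
together with the pair `(v*, w*)`; the pair indexed by `i : Fin g` with `i < g-1` is
`(e_{3i+2}, e_{3i+3})`, and the last pair (`i = g-1`) is `(v*, w*)`. -/
def famtau (g : ℕ) (p : Fin g × Fin 2) : Idx g → ℤ :=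
  if (p.1 : ℕ) < g - 1 then
    (if p.2 = 0 then evec g (3 * (p.1 : ℕ) + 2) else evec g (3 * (p.1 : ℕ) + 3))
  else (if p.2 = 0 then vstar g else wstar g)

lemma mem_Aset_iff {g a : ℕ} :
    a ∈ Aset g ↔ a = 0 ∨ a = 1 ∨ ∃ k, k < g - 1 ∧ (a = 3 * k + 2 ∨ a = 3 * k + 3) := by
  simp [Aset, Finset.mem_union, Finset.mem_insert, Finset.mem_biUnion, Finset.mem_range]

lemma mem_Aset_zero (g : ℕ) : 0 ∈ Aset g := mem_Aset_iff.2 (Or.inl rfl)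
lemma mem_Aset_one (g : ℕ) : 1 ∈ Aset g := mem_Aset_iff.2 (Or.inr (Or.inl rfl))
lemma mem_Aset_two {g k : ℕ} (hk : k < g - 1) : 3 * k + 2 ∈ Aset g :=
  mem_Aset_iff.2 (Or.inr (Or.inr ⟨k, hk, Or.inl rfl⟩))
lemma mem_Aset_three {g k : ℕ} (hk : k < g - 1) : 3 * k + 3 ∈ Aset g :=
  mem_Aset_iff.2 (Or.inr (Or.inr ⟨k, hk, Or.inr rfl⟩))

lemma evec_eq_single {g m : ℕ} (hm : m ∈ Aset g) :
    evec g m = Pi.single (⟨m, hm⟩ : Idx g) 1 := by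
  ext a
  simp [evec, Pi.single_apply, Subtype.ext_iff, eq_comm]

lemma pairing_single {g : ℕ} (Ω : Matrix (Idx g) (Idx g) ℤ) (i j : Idx g) :
    pairing Ω (Pi.single i 1) (Pi.single j 1) = Ω i j := by
  simp [pairing, Matrix.mulVec_single, dotProduct, Pi.single_apply]

lemma pairing_ee {g m n : ℕ} (hm : m ∈ Aset g) (hn : n ∈ Aset g) :
    pairing (OmTau g) (evec g m) (evec g n) =
      if m < n ∧ pbtau g n < pbtau g m then 1
      else if n < m ∧ pbtau g m < pbtau g n then -1 else 0 := by
  rw [evec_eq_single hm, evec_eq_single hn, pairing_single]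
  rfl

section Entries
variable {g k l : ℕ}

lemma pee22 (hk : k < g - 1) (hl : l < g - 1) :
    pairing (OmTau g) (evec g (3 * k + 2)) (evec g (3 * l + 2)) = 0 := by
  rw [pairing_ee (mem_Aset_two hk) (mem_Aset_two hl)]
  unfold pbtau; split_ifs <;> first | contradiction | omega

lemma pee23 (hk : k < g - 1) (hl : l < g - 1) :
    pairing (OmTau g) (evec g (3 * k + 2)) (evec g (3 * l + 3)) = if k = l then 1 else 0 := by
  rw [pairing_ee (mem_Aset_two hk) (mem_Aset_three hl)]
  unfold pbtau; split_ifs <;> first | contradiction | omega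

lemma pee32 (hk : k < g - 1) (hl : l < g - 1) :
    pairing (OmTau g) (evec g (3 * k + 3)) (evec g (3 * l + 2)) = if k = l then -1 else 0 := by
  rw [pairing_ee (mem_Aset_three hk) (mem_Aset_two hl)]
  unfold pbtau; split_ifs <;> first | contradiction | omega

lemma pee33 (hk : k < g - 1) (hl : l < g - 1) :
    pairing (OmTau g) (evec g (3 * k + 3)) (evec g (3 * l + 3)) = 0 := by
  rw [pairing_ee (mem_Aset_three hk) (mem_Aset_three hl)]
  unfold pbtau; split_ifs <;> first | contradiction | omega

lemma pee01 (hg : 1 ≤ g) : pairing (OmTau g) (evec g 0) (evec g 1) = 1 := by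
  rw [pairing_ee (mem_Aset_zero g) (mem_Aset_one g)]
  unfold pbtau; split_ifs <;> first | contradiction | omega

lemma pee02 (hk : k < g - 1) : pairing (OmTau g) (evec g 0) (evec g (3 * k + 2)) = 1 := by
  rw [pairing_ee (mem_Aset_zero g) (mem_Aset_two hk)]
  unfold pbtau; split_ifs <;> first | contradiction | omega

lemma pee03 (hk : k < g - 1) : pairing (OmTau g) (evec g 0) (evec g (3 * k + 3)) = 1 := by
  rw [pairing_ee (mem_Aset_zero g) (mem_Aset_three hk)]
  unfold pbtau; split_ifs <;> first | contradiction | omega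

lemma pee12 (hk : k < g - 1) : pairing (OmTau g) (evec g 1) (evec g (3 * k + 2)) = 1 := by
  rw [pairing_ee (mem_Aset_one g) (mem_Aset_two hk)]
  unfold pbtau; split_ifs <;> first | contradiction | omega

lemma pee13 (hk : k < g - 1) : pairing (OmTau g) (evec g 1) (evec g (3 * k + 3)) = 1 := by
  rw [pairing_ee (mem_Aset_one g) (mem_Aset_three hk)]
  unfold pbtau; split_ifs <;> first | contradiction | omega

lemma pee20 (hk : k < g - 1) : pairing (OmTau g) (evec g (3 * k + 2)) (evec g 0) = -1 := by
  rw [pairing_ee (mem_Aset_two hk) (mem_Aset_zero g)]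
  unfold pbtau; split_ifs <;> first | contradiction | omega

lemma pee30 (hk : k < g - 1) : pairing (OmTau g) (evec g (3 * k + 3)) (evec g 0) = -1 := by
  rw [pairing_ee (mem_Aset_three hk) (mem_Aset_zero g)]
  unfold pbtau; split_ifs <;> first | contradiction | omega

lemma pee21 (hk : k < g - 1) : pairing (OmTau g) (evec g (3 * k + 2)) (evec g 1) = -1 := by
  rw [pairing_ee (mem_Aset_two hk) (mem_Aset_one g)]
  unfold pbtau; split_ifs <;> first | contradiction | omega

lemma pee31 (hk : k < g - 1) : pairing (OmTau g) (evec g (3 * k + 3)) (evec g 1) = -1 := by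
  rw [pairing_ee (mem_Aset_three hk) (mem_Aset_one g)]
  unfold pbtau; split_ifs <;> first | contradiction | omega

end Entries

section MoreAux
variable {g : ℕ}

lemma pairing_neg_right (Ω : Matrix (Idx g) (Idx g) ℤ) (v u : Idx g → ℤ) :
    pairing Ω v (-u) = -pairing Ω v u := by
  simp [pairing, Matrix.mulVec_neg]

lemma pairing_add_left (Ω : Matrix (Idx g) (Idx g) ℤ) (u w v : Idx g → ℤ) :
    pairing Ω (u + w) v = pairing Ω u v + pairing Ω w v := by
  unfold pairing; rw [add_dotProduct]

lemma pairing_sum_right (Ω : Matrix (Idx g) (Idx g) ℤ) (v : Idx g → ℤ)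
    (s : Finset ℕ) (f : ℕ → Idx g → ℤ) :
    pairing Ω v (∑ k ∈ s, f k) = ∑ k ∈ s, pairing Ω v (f k) := by
  classical
  induction s using Finset.induction_on with
  | empty => simp [pairing]
  | insert a s h ih => rw [Finset.sum_insert h, pairing_add, ih, Finset.sum_insert h]

lemma pairing_swap (Ω : Matrix (Idx g) (Idx g) ℤ) (hΩ : Ωᵀ = -Ω) (u v : Idx g → ℤ) :
    pairing Ω u v = -pairing Ω v u := by
  have h := pairing_self_zero Ω hΩ (u + v)
  rw [pairing_add_left, pairing_add, pairing_add, pairing_self_zero Ω hΩ u,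
    pairing_self_zero Ω hΩ v] at h
  omega

/-- The common correction vector in `v*` and `w*`. -/
def sig (g : ℕ) : Idx g → ℤ :=
  ∑ k ∈ Finset.range (g - 1), (-evec g (3 * k + 2) + evec g (3 * k + 3))

lemma vstar_eq : vstar g = evec g 0 + sig g := rfl
lemma wstar_eq : wstar g = evec g 1 + sig g := rfl

lemma sig_apply_01 {m : ℕ} (hm : m < 2) (h : m ∈ Aset g) : sig g ⟨m, h⟩ = 0 := by
  rw [sig, Finset.sum_apply]
  refine Finset.sum_eq_zero fun k hk => ?_
  have h2 : ((⟨m, h⟩ : Idx g) : ℕ) = m := rfl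
  simp only [Pi.add_apply, Pi.neg_apply, evec, h2]
  split_ifs <;> omega

lemma p2sig {k : ℕ} (hk : k < g - 1) :
    pairing (OmTau g) (evec g (3 * k + 2)) (sig g) = 1 := by
  rw [sig, pairing_sum_right]
  have h : ∀ l ∈ Finset.range (g - 1),
      pairing (OmTau g) (evec g (3 * k + 2)) (-evec g (3 * l + 2) + evec g (3 * l + 3))
        = if k = l then 1 else 0 := by
    intro l hl
    rw [Finset.mem_range] at hl
    rw [pairing_add, pairing_neg_right, pee22 hk hl, pee23 hk hl]
    ring
  rw [Finset.sum_congr rfl h, Finset.sum_ite_eq]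
  simp [Finset.mem_range, hk]

lemma p3sig {k : ℕ} (hk : k < g - 1) :
    pairing (OmTau g) (evec g (3 * k + 3)) (sig g) = 1 := by
  rw [sig, pairing_sum_right]
  have h : ∀ l ∈ Finset.range (g - 1),
      pairing (OmTau g) (evec g (3 * k + 3)) (-evec g (3 * l + 2) + evec g (3 * l + 3))
        = if k = l then 1 else 0 := by
    intro l hl
    rw [Finset.mem_range] at hl
    rw [pairing_add, pairing_neg_right, pee32 hk hl, pee33 hk hl]
    split_ifs <;> ring
  rw [Finset.sum_congr rfl h, Finset.sum_ite_eq]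
  simp [Finset.mem_range, hk]

lemma p0sig : pairing (OmTau g) (evec g 0) (sig g) = 0 := by
  rw [sig, pairing_sum_right]
  refine Finset.sum_eq_zero fun l hl => ?_
  rw [Finset.mem_range] at hl
  rw [pairing_add, pairing_neg_right, pee02 hl, pee03 hl]
  ring

lemma p1sig : pairing (OmTau g) (evec g 1) (sig g) = 0 := by
  rw [sig, pairing_sum_right]
  refine Finset.sum_eq_zero fun l hl => ?_
  rw [Finset.mem_range] at hl
  rw [pairing_add, pairing_neg_right, pee12 hl, pee13 hl]
  ring

lemma pvw (hg : 1 ≤ g) : pairing (OmTau g) (vstar g) (wstar g) = 1 := by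
  rw [vstar_eq, wstar_eq, pairing_add_left, pairing_add, pairing_add,
    pee01 hg, p0sig, pairing_self_zero _ (OmTau_skew g),
    pairing_swap _ (OmTau_skew g) (sig g) (evec g 1), p1sig]
  ring

lemma p2v {k : ℕ} (hk : k < g - 1) :
    pairing (OmTau g) (evec g (3 * k + 2)) (vstar g) = 0 := by
  rw [vstar_eq, pairing_add, pee20 hk, p2sig hk]; ring

lemma p2w {k : ℕ} (hk : k < g - 1) :
    pairing (OmTau g) (evec g (3 * k + 2)) (wstar g) = 0 := by
  rw [wstar_eq, pairing_add, pee21 hk, p2sig hk]; ring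

lemma p3v {k : ℕ} (hk : k < g - 1) :
    pairing (OmTau g) (evec g (3 * k + 3)) (vstar g) = 0 := by
  rw [vstar_eq, pairing_add, pee30 hk, p3sig hk]; ring

lemma p3w {k : ℕ} (hk : k < g - 1) :
    pairing (OmTau g) (evec g (3 * k + 3)) (wstar g) = 0 := by
  rw [wstar_eq, pairing_add, pee31 hk, p3sig hk]; ring

lemma pv2 {k : ℕ} (hk : k < g - 1) :
    pairing (OmTau g) (vstar g) (evec g (3 * k + 2)) = 0 := by
  rw [pairing_swap _ (OmTau_skew g), p2v hk]; ring

lemma pv3 {k : ℕ} (hk : k < g - 1) :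
    pairing (OmTau g) (vstar g) (evec g (3 * k + 3)) = 0 := by
  rw [pairing_swap _ (OmTau_skew g), p3v hk]; ring

lemma pw2 {k : ℕ} (hk : k < g - 1) :
    pairing (OmTau g) (wstar g) (evec g (3 * k + 2)) = 0 := by
  rw [pairing_swap _ (OmTau_skew g), p2w hk]; ring

lemma pw3 {k : ℕ} (hk : k < g - 1) :
    pairing (OmTau g) (wstar g) (evec g (3 * k + 3)) = 0 := by
  rw [pairing_swap _ (OmTau_skew g), p3w hk]; ring

end MoreAux

section FamAux
variable {g : ℕ}

lemma famtau0 (m : Fin g) (hm : (m : ℕ) < g - 1) :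
    famtau g (m, 0) = evec g (3 * (m : ℕ) + 2) := by simp [famtau, hm]

lemma famtau1 (m : Fin g) (hm : (m : ℕ) < g - 1) :
    famtau g (m, 1) = evec g (3 * (m : ℕ) + 3) := by simp [famtau, hm]

lemma famtauv (m : Fin g) (hm : ¬ (m : ℕ) < g - 1) : famtau g (m, 0) = vstar g := by
  simp [famtau, hm]

lemma famtauw (m : Fin g) (hm : ¬ (m : ℕ) < g - 1) : famtau g (m, 1) = wstar g := by
  simp [famtau, hm]

end FamAux

section BasisAux
variable {g : ℕ}

lemma fin2_cases (s : Fin 2) : s = 0 ∨ s = 1 := by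
  have hlt := s.isLt
  rcases (show ((s : ℕ) = 0 ∨ (s : ℕ) = 1) by omega) with h | h
  · exact Or.inl (Fin.ext h)
  · exact Or.inr (Fin.ext h)


lemma sig_zero : sig g ⟨0, mem_Aset_zero g⟩ = 0 := sig_apply_01 (by omega) _
lemma sig_one : sig g ⟨1, mem_Aset_one g⟩ = 0 := sig_apply_01 (by omega) _

/-- The linear automorphism of `ℤ^A` sending `e_0 ↦ v*`, `e_1 ↦ w*` and fixing the
other basis vectors. -/
def Tmap (g : ℕ) : (Idx g → ℤ) ≃ₗ[ℤ] (Idx g → ℤ) where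
  toFun u := u + (u ⟨0, mem_Aset_zero g⟩ + u ⟨1, mem_Aset_one g⟩) • sig g
  invFun u := u - (u ⟨0, mem_Aset_zero g⟩ + u ⟨1, mem_Aset_one g⟩) • sig g
  map_add' u w := by
    funext a
    simp only [Pi.add_apply, Pi.smul_apply, smul_eq_mul]
    ring
  map_smul' c u := by
    funext a
    simp only [Pi.add_apply, Pi.smul_apply, smul_eq_mul, RingHom.id_apply]
    ring
  left_inv u := by
    funext a
    simp only [Pi.add_apply, Pi.sub_apply, Pi.smul_apply, smul_eq_mul, sig_zero, sig_one]
    ring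
  right_inv u := by
    funext a
    simp only [Pi.add_apply, Pi.sub_apply, Pi.smul_apply, smul_eq_mul, sig_zero, sig_one]
    ring

lemma evec_apply_ne {m x : ℕ} (h : x ∈ Aset g) (hne : x ≠ m) : evec g m ⟨x, h⟩ = 0 := by
  have h2 : ((⟨x, h⟩ : Idx g) : ℕ) = x := rfl
  simp only [evec, h2]
  exact if_neg hne

lemma evec_apply_eq {m : ℕ} (h : m ∈ Aset g) : evec g m ⟨m, h⟩ = 1 := by
  have h2 : ((⟨m, h⟩ : Idx g) : ℕ) = m := rfl
  simp [evec, h2]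

lemma Tmap_evec_ge2 {m : ℕ} (hm : 2 ≤ m) : Tmap g (evec g m) = evec g m := by
  show evec g m + (evec g m ⟨0, mem_Aset_zero g⟩ + evec g m ⟨1, mem_Aset_one g⟩) • sig g
      = evec g m
  rw [evec_apply_ne _ (by omega), evec_apply_ne _ (by omega)]
  simp

lemma Tmap_evec_zero : Tmap g (evec g 0) = vstar g := by
  show evec g 0 + (evec g 0 ⟨0, mem_Aset_zero g⟩ + evec g 0 ⟨1, mem_Aset_one g⟩) • sig g
      = vstar g
  rw [evec_apply_eq, evec_apply_ne _ (by omega), vstar_eq]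
  simp [sig]

lemma Tmap_evec_one : Tmap g (evec g 1) = wstar g := by
  show evec g 1 + (evec g 1 ⟨0, mem_Aset_zero g⟩ + evec g 1 ⟨1, mem_Aset_one g⟩) • sig g
      = wstar g
  rw [evec_apply_eq, evec_apply_ne _ (by omega), wstar_eq]
  simp [sig]

/-- Indexing bijection `Fin g × Fin 2 → A`. -/
def fIdx (g : ℕ) (p : Fin g × Fin 2) : Idx g :=
  if h : (p.1 : ℕ) < g - 1 then
    ⟨3 * (p.1 : ℕ) + 2 + (p.2 : ℕ),
      mem_Aset_iff.2 (Or.inr (Or.inr ⟨(p.1 : ℕ), h, by have := p.2.isLt; omega⟩))⟩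
  else
    ⟨(p.2 : ℕ), by
      have hlt := p.2.isLt
      rcases (show ((p.2 : ℕ) = 0 ∨ (p.2 : ℕ) = 1) by omega) with h2 | h2
      · exact h2 ▸ mem_Aset_zero g
      · exact h2 ▸ mem_Aset_one g⟩

lemma fIdx_val_lt {p : Fin g × Fin 2} (h : (p.1 : ℕ) < g - 1) :
    ((fIdx g p : Idx g) : ℕ) = 3 * (p.1 : ℕ) + 2 + (p.2 : ℕ) := by
  unfold fIdx; rw [dif_pos h]

lemma fIdx_val_ge {p : Fin g × Fin 2} (h : ¬ (p.1 : ℕ) < g - 1) :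
    ((fIdx g p : Idx g) : ℕ) = (p.2 : ℕ) := by
  unfold fIdx; rw [dif_neg h]

lemma fIdx_injective (g : ℕ) : Function.Injective (fIdx g) := by
  rintro ⟨i, s⟩ ⟨j, t⟩ h
  have h' : ((fIdx g (i, s)) : ℕ) = ((fIdx g (j, t)) : ℕ) := congrArg Subtype.val h
  have hs := s.isLt; have ht := t.isLt; have hi := i.isLt; have hj := j.isLt
  by_cases h1 : (i : ℕ) < g - 1 <;> by_cases h2 : (j : ℕ) < g - 1 <;>
    [rw [fIdx_val_lt h1, fIdx_val_lt h2] at h';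
     rw [fIdx_val_lt h1, fIdx_val_ge h2] at h';
     rw [fIdx_val_ge h1, fIdx_val_lt h2] at h';
     rw [fIdx_val_ge h1, fIdx_val_ge h2] at h'] <;>
    dsimp only at h' <;>
    first
      | (exfalso; omega)
      | (simp only [Prod.mk.injEq]; exact ⟨Fin.ext (by omega), Fin.ext (by omega)⟩)

lemma fIdx_surjective (g : ℕ) (hg : 3 ≤ g) : Function.Surjective (fIdx g) := by
  rintro ⟨a, ha⟩
  have hg1 : g - 1 < g := by omega
  rcases mem_Aset_iff.1 ha with h | h | ⟨k, hk, h | h⟩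
  · refine ⟨(⟨g - 1, hg1⟩, 0), Subtype.ext ?_⟩
    rw [fIdx_val_ge (by simp)]
    simp [h]
  · refine ⟨(⟨g - 1, hg1⟩, 1), Subtype.ext ?_⟩
    rw [fIdx_val_ge (by simp)]
    simp [h]
  · refine ⟨(⟨k, by omega⟩, 0), Subtype.ext ?_⟩
    rw [fIdx_val_lt (by simpa using hk)]
    simp [h]
  · refine ⟨(⟨k, by omega⟩, 1), Subtype.ext ?_⟩
    rw [fIdx_val_lt (by simpa using hk)]
    simp [h]

/-- The indexing bijection as an equivalence. -/
noncomputable def eIdx (g : ℕ) (hg : 3 ≤ g) : Fin g × Fin 2 ≃ Idx g :=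
  Equiv.ofBijective (fIdx g) ⟨fIdx_injective g, fIdx_surjective g hg⟩

/-- The symplectic basis, as a `Basis`. -/
noncomputable def btau (g : ℕ) (hg : 3 ≤ g) : Module.Basis (Fin g × Fin 2) ℤ (Idx g → ℤ) :=
  ((Pi.basisFun ℤ (Idx g)).reindex (eIdx g hg).symm).map (Tmap g)

lemma btau_apply (hg : 3 ≤ g) (p : Fin g × Fin 2) :
    btau g hg p = Tmap g (evec g ((fIdx g p : Idx g) : ℕ)) := by
  rw [btau, Module.Basis.map_apply, Module.Basis.reindex_apply, Equiv.symm_symm, Pi.basisFun_apply]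
  congr 1
  exact (evec_eq_single (fIdx g p).2).symm

lemma btau_eq_famtau (hg : 3 ≤ g) (p : Fin g × Fin 2) : btau g hg p = famtau g p := by
  obtain ⟨i, s⟩ := p
  rw [btau_apply hg]
  rcases fin2_cases s with rfl | rfl <;> by_cases h : (i : ℕ) < g - 1
  · have hval : ((fIdx g (i, 0) : Idx g) : ℕ) = 3 * (i : ℕ) + 2 := fIdx_val_lt h
    rw [hval, Tmap_evec_ge2 (by omega), famtau0 _ h]
  · have hval : ((fIdx g (i, 0) : Idx g) : ℕ) = 0 := fIdx_val_ge h
    rw [hval, Tmap_evec_zero, famtauv _ h]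
  · have hval : ((fIdx g (i, 1) : Idx g) : ℕ) = 3 * (i : ℕ) + 3 := fIdx_val_lt h
    rw [hval, Tmap_evec_ge2 (by omega), famtau1 _ h]
  · have hval : ((fIdx g (i, 1) : Idx g) : ℕ) = 1 := fIdx_val_ge h
    rw [hval, Tmap_evec_one, famtauw _ h]

end BasisAux


/-- Lemma 3.1 of the paper: for `g ≥ 3`, the pairs `(e_{3k+2}, e_{3k+3})`, `0 ≤ k ≤ g-2`,
together with `(v*, w*)` form a symplectic basis of `(ℤ^A, ⟨·,·⟩)` for the form of `τ^{(g)}`. -/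
theorem statement6 (g : ℕ) (hg : 3 ≤ g) :
    (∃ b : Module.Basis (Fin g × Fin 2) ℤ (Idx g → ℤ), ∀ p, b p = famtau g p) ∧
    (∀ i : Fin g, pairing (OmTau g) (famtau g (i, 0)) (famtau g (i, 1)) = 1) ∧
    (∀ i j : Fin g, i ≠ j → ∀ s t : Fin 2,
      pairing (OmTau g) (famtau g (i, s)) (famtau g (j, t)) = 0) := by
  refine ⟨⟨btau g hg, btau_eq_famtau hg⟩, ?_, ?_⟩
  · intro i
    by_cases h : (i : ℕ) < g - 1
    · rw [famtau0 _ h, famtau1 _ h, pee23 h h]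
      simp
    · rw [famtauv _ h, famtauw _ h, pvw (by omega)]
  · intro i j hij s t
    have hv : (i : ℕ) ≠ (j : ℕ) := fun hc => hij (Fin.ext hc)
    by_cases hi : (i : ℕ) < g - 1 <;> by_cases hj : (j : ℕ) < g - 1
    · rcases fin2_cases s with rfl | rfl <;> rcases fin2_cases t with rfl | rfl
      · rw [famtau0 _ hi, famtau0 _ hj, pee22 hi hj]
      · rw [famtau0 _ hi, famtau1 _ hj, pee23 hi hj]; exact if_neg hv
      · rw [famtau1 _ hi, famtau0 _ hj, pee32 hi hj]; exact if_neg hv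
      · rw [famtau1 _ hi, famtau1 _ hj, pee33 hi hj]
    · rcases fin2_cases s with rfl | rfl <;> rcases fin2_cases t with rfl | rfl
      · rw [famtau0 _ hi, famtauv _ hj, p2v hi]
      · rw [famtau0 _ hi, famtauw _ hj, p2w hi]
      · rw [famtau1 _ hi, famtauv _ hj, p3v hi]
      · rw [famtau1 _ hi, famtauw _ hj, p3w hi]
    · rcases fin2_cases s with rfl | rfl <;> rcases fin2_cases t with rfl | rfl
      · rw [famtauv _ hi, famtau0 _ hj, pv2 hj]
      · rw [famtauv _ hi, famtau1 _ hj, pv3 hj]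
      · rw [famtauw _ hi, famtau0 _ hj, pw2 hj]
      · rw [famtauw _ hi, famtau1 _ hj, pw3 hj]
    · exact absurd (Fin.ext (by have := i.isLt; have := j.isLt; omega)) hij
end

section
/- Let g ≥ 3, let Ω be the alternating form of the permutation τ^{(g)}, and set v* = e_0 + Σ_{k=0}^{g−2}(−e_{3k+2} + e_{3k+3}) and w* = e_1 + Σ_{k=0}^{g−2}(−e_{3k+2} + e_{3k+3}). If 3g−3 ≡ 3 (mod 6), then T_{v*}² and T_{w*}² belong to the subgroup of GL(ℤ^A) generated by {T_{e_α} : α ∈ A}, and v* + w* belongs to the Ω-closure {e_α : α ∈ A}^Ω. If 3g−3 ≡ 0 (mod 6), then v*, w*, and v* + w* all belong to {e_α : α ∈ A}^Ω. -/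
open Matrix

/-- The symplectic transvection along `v` for the form of `τ^{(g)}`. -/
def Ttau (g : ℕ) (v : Idx g → ℤ) : (Idx g → ℤ) ≃ₗ[ℤ] (Idx g → ℤ) :=
  transvection (OmTau g) (OmTau_skew g) v

/-! ### Auxiliary development for Lemma 3.5 -/

namespace L35

open Finset

/-- shorthand for the Ω-closure of the standard basis. -/
abbrev Cl (g : ℕ) : (Idx g → ℤ) → Prop :=
  OmegaClosure (pairing (OmTau g)) (Set.range fun a : Idx g => evec g (a : ℕ))

/-! #### bilinearity of the pairing -/

lemma pairing_zero_right {g : ℕ} (Ω : Matrix (Idx g) (Idx g) ℤ) (v : Idx g → ℤ) :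
    pairing Ω v 0 = 0 := by
  unfold pairing; rw [Matrix.mulVec_zero, dotProduct_zero]

lemma pairing_zero_left {g : ℕ} (Ω : Matrix (Idx g) (Idx g) ℤ) (v : Idx g → ℤ) :
    pairing Ω 0 v = 0 := by
  unfold pairing; rw [zero_dotProduct]

lemma pairing_neg_right {g : ℕ} (Ω : Matrix (Idx g) (Idx g) ℤ) (v u : Idx g → ℤ) :
    pairing Ω v (-u) = -pairing Ω v u := by
  unfold pairing; rw [Matrix.mulVec_neg, dotProduct_neg]

lemma pairing_add_left {g : ℕ} (Ω : Matrix (Idx g) (Idx g) ℤ) (u w v : Idx g → ℤ) :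
    pairing Ω (u + w) v = pairing Ω u v + pairing Ω w v := by
  unfold pairing; rw [add_dotProduct]

lemma pairing_sub_left {g : ℕ} (Ω : Matrix (Idx g) (Idx g) ℤ) (u w v : Idx g → ℤ) :
    pairing Ω (u - w) v = pairing Ω u v - pairing Ω w v := by
  unfold pairing; rw [sub_dotProduct]

lemma pairing_neg_left {g : ℕ} (Ω : Matrix (Idx g) (Idx g) ℤ) (u v : Idx g → ℤ) :
    pairing Ω (-u) v = -pairing Ω u v := by
  unfold pairing; rw [neg_dotProduct]

lemma pairing_smul_left {g : ℕ} (Ω : Matrix (Idx g) (Idx g) ℤ) (c : ℤ) (u v : Idx g → ℤ) :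
    pairing Ω (c • u) v = c * pairing Ω u v := by
  unfold pairing; rw [smul_dotProduct, smul_eq_mul]

lemma pairing_sum_right {g : ℕ} (Ω : Matrix (Idx g) (Idx g) ℤ) (v : Idx g → ℤ)
    {ι : Type*} (s : Finset ι) (f : ι → Idx g → ℤ) :
    pairing Ω v (∑ i ∈ s, f i) = ∑ i ∈ s, pairing Ω v (f i) := by
  classical
  induction s using Finset.induction_on with
  | empty => simpa using pairing_zero_right Ω v
  | insert _ _ h ih => rw [Finset.sum_insert h, Finset.sum_insert h, pairing_add, ih]

lemma pairing_sum_left {g : ℕ} (Ω : Matrix (Idx g) (Idx g) ℤ) (v : Idx g → ℤ)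
    {ι : Type*} (s : Finset ι) (f : ι → Idx g → ℤ) :
    pairing Ω (∑ i ∈ s, f i) v = ∑ i ∈ s, pairing Ω (f i) v := by
  classical
  induction s using Finset.induction_on with
  | empty => simpa using pairing_zero_left Ω v
  | insert _ _ h ih => rw [Finset.sum_insert h, Finset.sum_insert h, pairing_add_left, ih]

lemma pairing_anti {g : ℕ} (Ω : Matrix (Idx g) (Idx g) ℤ) (hΩ : Ωᵀ = -Ω)
    (u v : Idx g → ℤ) : pairing Ω u v = -pairing Ω v u := by
  have : pairing Ω u v + pairing Ω v u = 0 := by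
    calc pairing Ω u v + pairing Ω v u
        = (∑ a, ∑ b, u a * (Ω a b * v b)) + ∑ a, ∑ b, v a * (Ω a b * u b) := by
          simp [pairing, dotProduct, Matrix.mulVec, Finset.mul_sum]
    _ = (∑ a, ∑ b, u a * (Ω a b * v b)) + ∑ a, ∑ b, v b * (Ω b a * u a) := by
          rw [Finset.sum_comm (s := Finset.univ) (t := Finset.univ)
            (f := fun a b => v a * (Ω a b * u b))]
    _ = (∑ a, ∑ b, u a * (Ω a b * v b)) + ∑ a, ∑ b, -(u a * (Ω a b * v b)) := by
          congr 1
          refine Finset.sum_congr rfl fun a _ => Finset.sum_congr rfl fun b _ => ?_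
          have h : Ω b a = -Ω a b := by
            have := congrFun (congrFun hΩ a) b
            simp only [Matrix.transpose_apply, Matrix.neg_apply] at this
            omega
          rw [h]; ring
    _ = 0 := by simp
  omega

/-! #### membership and `pbtau` values -/

lemma mem_A_b {g b : ℕ} (hb : b ≤ 1) : b ∈ Aset g := by
  simp only [Aset, Finset.mem_union, Finset.mem_insert, Finset.mem_singleton]
  exact Or.inl (by omega)

lemma mem_A_a {g k : ℕ} (hk : k < g - 1) : 3 * k + 2 ∈ Aset g := by
  simp only [Aset, Finset.mem_union, Finset.mem_insert, Finset.mem_singleton,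
    Finset.mem_biUnion, Finset.mem_range]
  exact Or.inr ⟨k, hk, Or.inl rfl⟩

lemma mem_A_c {g k : ℕ} (hk : k < g - 1) : 3 * k + 3 ∈ Aset g := by
  simp only [Aset, Finset.mem_union, Finset.mem_insert, Finset.mem_singleton,
    Finset.mem_biUnion, Finset.mem_range]
  exact Or.inr ⟨k, hk, Or.inr rfl⟩

lemma pb_a (g k : ℕ) : pbtau g (3 * k + 2) = 2 * k + 2 := by
  unfold pbtau; split_ifs <;> first | omega | (exfalso; assumption)

lemma pb_c (g k : ℕ) : pbtau g (3 * k + 3) = 2 * k + 1 := by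
  unfold pbtau; split_ifs <;> first | omega | (exfalso; assumption)

lemma pb_b (g b : ℕ) (hb : b ≤ 1) : pbtau g b = 2 * g - b := by
  unfold pbtau; split_ifs <;> omega

/-! #### pairing of basis vectors -/

lemma evec_single {g α : ℕ} (hα : α ∈ Aset g) :
    evec g α = Pi.single (⟨α, hα⟩ : Idx g) 1 := by
  funext a
  simp [evec, Pi.single_apply, Subtype.ext_iff]

lemma pairing_evec {g α β : ℕ} (hα : α ∈ Aset g) (hβ : β ∈ Aset g) :
    pairing (OmTau g) (evec g α) (evec g β) =
      if α < β ∧ pbtau g β < pbtau g α then 1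
      else if β < α ∧ pbtau g α < pbtau g β then -1 else 0 := by
  rw [evec_single hα, evec_single hβ]
  show Pi.single _ 1 ⬝ᵥ (OmTau g).mulVec (Pi.single _ 1) = _
  rw [Matrix.mulVec_single, dotProduct, Finset.sum_eq_single (⟨α, hα⟩ : Idx g)]
  · simp [OmTau, Om]
  · intro b _ hb; simp [Pi.single_apply, hb]
  · simp

variable {g : ℕ}

lemma pr_bb (hg : 3 ≤ g) {b b' : ℕ} (hb : b ≤ 1) (hb' : b' ≤ 1) :
    pairing (OmTau g) (evec g b) (evec g b') = if b < b' then 1 else if b' < b then -1 else 0 := by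
  rw [pairing_evec (mem_A_b hb) (mem_A_b hb'), pb_b g b hb, pb_b g b' hb']
  split_ifs <;> omega

lemma pr_b_a (hg : 3 ≤ g) {b k : ℕ} (hb : b ≤ 1) (hk : k < g - 1) :
    pairing (OmTau g) (evec g b) (evec g (3 * k + 2)) = 1 := by
  rw [pairing_evec (mem_A_b hb) (mem_A_a hk), pb_b g b hb, pb_a]
  split_ifs <;> omega

lemma pr_b_c (hg : 3 ≤ g) {b k : ℕ} (hb : b ≤ 1) (hk : k < g - 1) :
    pairing (OmTau g) (evec g b) (evec g (3 * k + 3)) = 1 := by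
  rw [pairing_evec (mem_A_b hb) (mem_A_c hk), pb_b g b hb, pb_c]
  split_ifs <;> omega

lemma pr_a_b (hg : 3 ≤ g) {b k : ℕ} (hb : b ≤ 1) (hk : k < g - 1) :
    pairing (OmTau g) (evec g (3 * k + 2)) (evec g b) = -1 := by
  rw [pairing_evec (mem_A_a hk) (mem_A_b hb), pb_b g b hb, pb_a]
  split_ifs <;> omega

lemma pr_c_b (hg : 3 ≤ g) {b k : ℕ} (hb : b ≤ 1) (hk : k < g - 1) :
    pairing (OmTau g) (evec g (3 * k + 3)) (evec g b) = -1 := by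
  rw [pairing_evec (mem_A_c hk) (mem_A_b hb), pb_b g b hb, pb_c]
  split_ifs <;> omega

lemma pr_aa {k l : ℕ} (hk : k < g - 1) (hl : l < g - 1) :
    pairing (OmTau g) (evec g (3 * k + 2)) (evec g (3 * l + 2)) = 0 := by
  rw [pairing_evec (mem_A_a hk) (mem_A_a hl), pb_a, pb_a]
  split_ifs <;> omega

lemma pr_cc {k l : ℕ} (hk : k < g - 1) (hl : l < g - 1) :
    pairing (OmTau g) (evec g (3 * k + 3)) (evec g (3 * l + 3)) = 0 := by
  rw [pairing_evec (mem_A_c hk) (mem_A_c hl), pb_c, pb_c]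
  split_ifs <;> omega

lemma pr_ac {k l : ℕ} (hk : k < g - 1) (hl : l < g - 1) :
    pairing (OmTau g) (evec g (3 * k + 2)) (evec g (3 * l + 3)) = if k = l then 1 else 0 := by
  rw [pairing_evec (mem_A_a hk) (mem_A_c hl), pb_a, pb_c]
  split_ifs <;> omega

lemma pr_ca {k l : ℕ} (hk : k < g - 1) (hl : l < g - 1) :
    pairing (OmTau g) (evec g (3 * k + 3)) (evec g (3 * l + 2)) = if k = l then -1 else 0 := by
  rw [pairing_evec (mem_A_c hk) (mem_A_a hl), pb_c, pb_a]
  split_ifs <;> omega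

/-! #### the vectors `D k = e_{3k+3} - e_{3k+2}`, partial sums, and `U j` -/

def Dv (g k : ℕ) : Idx g → ℤ := evec g (3 * k + 3) - evec g (3 * k + 2)

def Sv (g j : ℕ) : Idx g → ℤ := ∑ k ∈ Finset.range j, Dv g k

def Uv (g j : ℕ) : Idx g → ℤ := evec g 0 + Sv g j

def Uv' (g j : ℕ) : Idx g → ℤ := evec g 1 + Sv g j

lemma pr_b_D (hg : 3 ≤ g) {b k : ℕ} (hb : b ≤ 1) (hk : k < g - 1) :
    pairing (OmTau g) (evec g b) (Dv g k) = 0 := by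
  rw [Dv, pairing_sub, pr_b_c hg hb hk, pr_b_a hg hb hk]; ring

lemma pr_D_b (hg : 3 ≤ g) {b k : ℕ} (hb : b ≤ 1) (hk : k < g - 1) :
    pairing (OmTau g) (Dv g k) (evec g b) = 0 := by
  rw [Dv, pairing_sub_left, pr_c_b hg hb hk, pr_a_b hg hb hk]; ring

lemma pr_a_D {k l : ℕ} (hk : k < g - 1) (hl : l < g - 1) :
    pairing (OmTau g) (evec g (3 * k + 2)) (Dv g l) = if k = l then 1 else 0 := by
  rw [Dv, pairing_sub, pr_ac hk hl, pr_aa hk hl]; ring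

lemma pr_c_D {k l : ℕ} (hk : k < g - 1) (hl : l < g - 1) :
    pairing (OmTau g) (evec g (3 * k + 3)) (Dv g l) = if k = l then 1 else 0 := by
  rw [Dv, pairing_sub, pr_cc hk hl, pr_ca hk hl]
  split_ifs <;> ring

lemma pr_D_a {k l : ℕ} (hk : k < g - 1) (hl : l < g - 1) :
    pairing (OmTau g) (Dv g k) (evec g (3 * l + 2)) = if k = l then -1 else 0 := by
  rw [Dv, pairing_sub_left, pr_ca hk hl, pr_aa hk hl]; ring

lemma pr_D_c {k l : ℕ} (hk : k < g - 1) (hl : l < g - 1) :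
    pairing (OmTau g) (Dv g k) (evec g (3 * l + 3)) = if k = l then -1 else 0 := by
  rw [Dv, pairing_sub_left, pr_cc hk hl, pr_ac hk hl]
  split_ifs <;> ring

lemma pr_D_D {k l : ℕ} (hk : k < g - 1) (hl : l < g - 1) :
    pairing (OmTau g) (Dv g k) (Dv g l) = 0 := by
  rw [Dv, pairing_sub_left, pr_c_D hk hl, pr_a_D hk hl]
  split_ifs <;> ring

lemma pr_b_S (hg : 3 ≤ g) {b j : ℕ} (hb : b ≤ 1) (hj : j ≤ g - 1) :
    pairing (OmTau g) (evec g b) (Sv g j) = 0 := by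
  rw [Sv, pairing_sum_right]
  exact Finset.sum_eq_zero fun k hk =>
    pr_b_D hg hb (by have := Finset.mem_range.mp hk; omega)

lemma pr_S_b (hg : 3 ≤ g) {b j : ℕ} (hb : b ≤ 1) (hj : j ≤ g - 1) :
    pairing (OmTau g) (Sv g j) (evec g b) = 0 := by
  rw [Sv, pairing_sum_left]
  exact Finset.sum_eq_zero fun k hk =>
    pr_D_b hg hb (by have := Finset.mem_range.mp hk; omega)

lemma pr_a_S {l j : ℕ} (hl : l < g - 1) (hj : j ≤ l) :
    pairing (OmTau g) (evec g (3 * l + 2)) (Sv g j) = 0 := by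
  rw [Sv, pairing_sum_right]
  refine Finset.sum_eq_zero fun k hk => ?_
  have hkr := Finset.mem_range.mp hk
  rw [pr_a_D hl (by omega), if_neg (by omega)]

lemma pr_c_S {l j : ℕ} (hl : l < g - 1) (hj : j ≤ l) :
    pairing (OmTau g) (evec g (3 * l + 3)) (Sv g j) = 0 := by
  rw [Sv, pairing_sum_right]
  refine Finset.sum_eq_zero fun k hk => ?_
  have hkr := Finset.mem_range.mp hk
  rw [pr_c_D hl (by omega), if_neg (by omega)]

lemma pr_S_a {l j : ℕ} (hl : l < g - 1) (hj : j ≤ l) :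
    pairing (OmTau g) (Sv g j) (evec g (3 * l + 2)) = 0 := by
  rw [Sv, pairing_sum_left]
  refine Finset.sum_eq_zero fun k hk => ?_
  have hkr := Finset.mem_range.mp hk
  rw [pr_D_a (by omega) hl, if_neg (by omega)]

lemma pr_S_c {l j : ℕ} (hl : l < g - 1) (hj : j ≤ l) :
    pairing (OmTau g) (Sv g j) (evec g (3 * l + 3)) = 0 := by
  rw [Sv, pairing_sum_left]
  refine Finset.sum_eq_zero fun k hk => ?_
  have hkr := Finset.mem_range.mp hk
  rw [pr_D_c (by omega) hl, if_neg (by omega)]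

lemma pr_D_S {k j : ℕ} (hk : k < g - 1) (hj : j ≤ g - 1) :
    pairing (OmTau g) (Dv g k) (Sv g j) = 0 := by
  rw [Sv, pairing_sum_right]
  refine Finset.sum_eq_zero fun l hl => ?_
  have hlr := Finset.mem_range.mp hl
  exact pr_D_D hk (by omega)

lemma pr_S_D {k j : ℕ} (hk : k < g - 1) (hj : j ≤ g - 1) :
    pairing (OmTau g) (Sv g j) (Dv g k) = 0 := by
  rw [Sv, pairing_sum_left]
  refine Finset.sum_eq_zero fun l hl => ?_
  have hlr := Finset.mem_range.mp hl
  exact pr_D_D (by omega) hk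

/-! #### closure basics -/

lemma cl_evec {α : ℕ} (hα : α ∈ Aset g) : Cl g (evec g α) :=
  OmegaClosure.base ⟨⟨α, hα⟩, rfl⟩

lemma cl_D {k : ℕ} (hk : k < g - 1) : Cl g (Dv g k) := by
  have h : Cl g (evec g (3 * k + 2) - evec g (3 * k + 3)) :=
    OmegaClosure.sub (cl_evec (mem_A_a hk)) (cl_evec (mem_A_c hk))
      (by rw [pr_ac hk hk, if_pos rfl])
  have := OmegaClosure.neg h
  rwa [neg_sub] at this

/-! #### convenient corollaries -/

lemma pr_01 (hg : 3 ≤ g) : pairing (OmTau g) (evec g 0) (evec g 1) = 1 := by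
  rw [pr_bb hg (by norm_num) (le_refl 1)]; norm_num

lemma pr_10 (hg : 3 ≤ g) : pairing (OmTau g) (evec g 1) (evec g 0) = -1 := by
  rw [pr_bb hg (le_refl 1) (by norm_num)]; norm_num

lemma pr_self (v : Idx g → ℤ) : pairing (OmTau g) v v = 0 :=
  pairing_self_zero (OmTau g) (OmTau_skew g) v

/-! #### the closure chains -/

lemma cl_U_step (hg : 3 ≤ g) {j : ℕ} (hj2 : j + 2 ≤ g - 1) (h : Cl g (Uv g j)) :
    Cl g (Uv g (j + 2)) := by
  have hj : j < g - 1 := by omega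
  have hj1 : j + 1 < g - 1 := by omega
  have h1le : (1:ℕ) ≤ 1 := le_refl 1
  have h0le : (0:ℕ) ≤ 1 := by norm_num
  have hP : Cl g (-evec g (3*j+2) - (evec g 1 - evec g (3*(j+1)+3))) := by
    refine OmegaClosure.sub (OmegaClosure.neg (cl_evec (mem_A_a hj)))
      (OmegaClosure.sub (cl_evec (mem_A_b h1le)) (cl_evec (mem_A_c hj1))
        (pr_b_c hg h1le hj1)) ?_
    rw [pairing_neg_left, pairing_sub, pr_a_b hg h1le hj, pr_ac hj hj1,
      if_neg (by omega : ¬ j = j + 1)]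
    ring
  have hQ : Cl g ((evec g 1 - evec g (3*(j+1)+2)) + (Uv g j + evec g (3*j+3))) := by
    refine OmegaClosure.add
      (OmegaClosure.sub (cl_evec (mem_A_b h1le)) (cl_evec (mem_A_a hj1))
        (pr_b_a hg h1le hj1))
      (OmegaClosure.add h (cl_evec (mem_A_c hj)) ?_) ?_
    · simp only [Uv, pairing_add_left]
      rw [pr_b_c hg h0le hj, pr_S_c hj (le_refl j)]; ring
    · simp only [Uv, pairing_sub_left, pairing_add, pairing_add_left]
      rw [pr_10 hg, pr_b_S hg h1le (by omega), pr_b_c hg h1le hj,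
        pr_a_b hg h0le hj1, pr_a_S hj1 (by omega), pr_ac hj1 hj,
        if_neg (by omega : ¬ j + 1 = j)]
      ring
  have hPQ : Cl g ((-evec g (3*j+2) - (evec g 1 - evec g (3*(j+1)+3))) +
      ((evec g 1 - evec g (3*(j+1)+2)) + (Uv g j + evec g (3*j+3)))) := by
    refine OmegaClosure.add hP hQ ?_
    simp only [Uv, pairing_add, pairing_sub, pairing_add_left, pairing_sub_left,
      pairing_neg_left]
    rw [pr_a_b hg h1le hj, pr_aa hj hj1, pr_a_b hg h0le hj, pr_a_S hj (le_refl j),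
      pr_ac hj hj, pr_self (evec g 1), pr_b_a hg h1le hj1, pr_10 hg,
      pr_b_S hg h1le (by omega), pr_b_c hg h1le hj, pr_c_b hg h1le hj1,
      pr_ca hj1 hj1, pr_c_b hg h0le hj1, pr_c_S hj1 (by omega), pr_cc hj1 hj]
    split_ifs <;> omega
  have hvec : Uv g (j + 2) = (-evec g (3*j+2) - (evec g 1 - evec g (3*(j+1)+3))) +
      ((evec g 1 - evec g (3*(j+1)+2)) + (Uv g j + evec g (3*j+3))) := by
    unfold Uv Sv
    rw [show j + 2 = (j+1)+1 by omega, Finset.sum_range_succ, Finset.sum_range_succ]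
    unfold Dv
    abel
  rw [hvec]; exact hPQ

lemma cl_U (hg : 3 ≤ g) : ∀ i : ℕ, 2 * i ≤ g - 1 → Cl g (Uv g (2 * i)) := by
  intro i
  induction i with
  | zero =>
      intro _
      have hvec : Uv g (2 * 0) = evec g 0 := by
        unfold Uv Sv; simp
      rw [hvec]; exact cl_evec (mem_A_b (by norm_num))
  | succ i ih =>
      intro hi
      have h2 : 2 * i + 2 ≤ g - 1 := by omega
      have := cl_U_step hg h2 (ih (by omega))
      rwa [show 2 * i + 2 = 2 * (i + 1) by omega] at this

lemma cl_U'_of (hg : 3 ≤ g) {j : ℕ} (hjle : j ≤ g - 1) (h : Cl g (Uv g j)) :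
    Cl g (Uv' g j) := by
  have h01 : Cl g (evec g 0 - evec g 1) :=
    OmegaClosure.sub (cl_evec (mem_A_b (by norm_num))) (cl_evec (mem_A_b (le_refl 1)))
      (pr_01 hg)
  have hpr : pairing (OmTau g) (evec g 0 - evec g 1) (Uv g j) = 1 := by
    simp only [Uv, pairing_sub_left, pairing_add]
    rw [pr_self (evec g 0), pr_b_S hg (by norm_num) hjle, pr_10 hg,
      pr_b_S hg (le_refl 1) hjle]
    ring
  have h2 := OmegaClosure.neg (OmegaClosure.sub h01 h hpr)
  have hvec : Uv' g j = -((evec g 0 - evec g 1) - Uv g j) := by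
    unfold Uv' Uv; abel
  rwa [hvec]

lemma cl_s (hg : 3 ≤ g) : ∀ j : ℕ, j ≤ g - 1 →
    Cl g (evec g 0 + evec g 1 + (Sv g j + Sv g j)) := by
  intro j
  induction j with
  | zero =>
      intro _
      have h : Cl g (evec g 0 + evec g 1) :=
        OmegaClosure.add (cl_evec (mem_A_b (by norm_num))) (cl_evec (mem_A_b (le_refl 1)))
          (pr_01 hg)
      have hvec : evec g 0 + evec g 1 + (Sv g 0 + Sv g 0) = evec g 0 + evec g 1 := by
        unfold Sv; simp
      rw [hvec]; exact h
  | succ j ih =>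
      intro hj1
      have hj : j < g - 1 := by omega
      have hjle : j ≤ g - 1 := by omega
      have h0le : (0:ℕ) ≤ 1 := by norm_num
      have h1le : (1:ℕ) ≤ 1 := le_refl 1
      have hs := ih hjle
      set s : Idx g → ℤ := evec g 0 + evec g 1 + (Sv g j + Sv g j) with hs_def
      have t1 : Cl g (s - evec g 0) := by
        have hpr : pairing (OmTau g) (evec g 0) s = 1 := by
          simp only [hs_def, pairing_add]
          rw [pr_self (evec g 0), pr_01 hg, pr_b_S hg h0le hjle]
          ring
        have := OmegaClosure.neg (OmegaClosure.sub (cl_evec (mem_A_b h0le)) hs hpr)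
        rwa [neg_sub] at this
      have t2 : Cl g (s - evec g 0 + evec g (3*j+2)) := by
        refine OmegaClosure.add t1 (cl_evec (mem_A_a hj)) ?_
        simp only [hs_def, pairing_sub_left, pairing_add_left]
        rw [pr_b_a hg h0le hj, pr_b_a hg h1le hj, pr_S_a hj (le_refl j)]
        ring
      have t3 : Cl g (s - evec g 0 + evec g (3*j+2) + Dv g j) := by
        refine OmegaClosure.add t2 (cl_D hj) ?_
        simp only [hs_def, pairing_add_left, pairing_sub_left]
        rw [pr_b_D hg h0le hj, pr_b_D hg h1le hj, pr_S_D hj hjle, pr_a_D hj hj,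
          if_pos rfl]
        ring
      have t4 : Cl g (s - evec g 0 + evec g (3*j+2) + Dv g j + Dv g j) := by
        refine OmegaClosure.add t3 (cl_D hj) ?_
        simp only [hs_def, pairing_add_left, pairing_sub_left]
        rw [pr_b_D hg h0le hj, pr_b_D hg h1le hj, pr_S_D hj hjle, pr_a_D hj hj,
          if_pos rfl, pr_D_D hj hj]
        ring
      have t5 : Cl g (s - evec g 0 + evec g (3*j+2) + Dv g j + Dv g j - evec g (3*j+2)) := by
        have hpr : pairing (OmTau g) (evec g (3*j+2))
            (s - evec g 0 + evec g (3*j+2) + Dv g j + Dv g j) = 1 := by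
          simp only [hs_def, pairing_add, pairing_sub]
          rw [pr_a_b hg h0le hj, pr_a_b hg h1le hj, pr_a_S hj (le_refl j),
            pr_aa hj hj, pr_a_D hj hj, if_pos rfl]
          ring
        have := OmegaClosure.neg (OmegaClosure.sub (cl_evec (mem_A_a hj)) t4 hpr)
        rwa [neg_sub] at this
      have t6 : Cl g (evec g 0 +
          (s - evec g 0 + evec g (3*j+2) + Dv g j + Dv g j - evec g (3*j+2))) := by
        refine OmegaClosure.add (cl_evec (mem_A_b h0le)) t5 ?_
        simp only [hs_def, pairing_add, pairing_sub]
        rw [pr_self (evec g 0), pr_01 hg, pr_b_S hg h0le hjle, pr_b_a hg h0le hj,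
          pr_b_D hg h0le hj]
        ring
      have hvec : evec g 0 + evec g 1 + (Sv g (j+1) + Sv g (j+1)) = evec g 0 +
          (s - evec g 0 + evec g (3*j+2) + Dv g j + Dv g j - evec g (3*j+2)) := by
        rw [hs_def]
        unfold Sv
        rw [Finset.sum_range_succ]
        abel
      rw [hvec]; exact t6

lemma cl_plus2D (hg : 3 ≤ g) {b j : ℕ} (hb : b ≤ 1) (hj : j < g - 1)
    (h : Cl g (evec g b + Sv g j)) :
    Cl g (evec g b + Sv g j + (Dv g j + Dv g j)) := by
  have t1 : Cl g (evec g b + Sv g j + evec g (3*j+3)) := by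
    refine OmegaClosure.add h (cl_evec (mem_A_c hj)) ?_
    simp only [pairing_add_left]
    rw [pr_b_c hg hb hj, pr_S_c hj (le_refl j)]
    ring
  have t2 : Cl g (evec g b + Sv g j + evec g (3*j+3) + Dv g j) := by
    refine OmegaClosure.add t1 (cl_D hj) ?_
    simp only [pairing_add_left]
    rw [pr_b_D hg hb hj, pr_S_D hj (by omega), pr_c_D hj hj, if_pos rfl]
    ring
  have t3 : Cl g (evec g b + Sv g j + evec g (3*j+3) + Dv g j - evec g (3*j+2)) := by
    have hpr : pairing (OmTau g) (evec g (3*j+2))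
        (evec g b + Sv g j + evec g (3*j+3) + Dv g j) = 1 := by
      simp only [pairing_add]
      rw [pr_a_b hg hb hj, pr_a_S hj (le_refl j), pr_ac hj hj, if_pos rfl,
        pr_a_D hj hj, if_pos rfl]
      ring
    have := OmegaClosure.neg (OmegaClosure.sub (cl_evec (mem_A_a hj)) t2 hpr)
    rwa [neg_sub] at this
  have hvec : evec g b + Sv g j + (Dv g j + Dv g j) =
      evec g b + Sv g j + evec g (3*j+3) + Dv g j - evec g (3*j+2) := by
    unfold Dv; abel
  rw [hvec]; exact t3

/-! #### identification of `vstar`, `wstar` -/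

lemma vstar_eq : vstar g = Uv g (g - 1) := by
  unfold vstar Uv Sv Dv
  congr 1
  exact Finset.sum_congr rfl fun k _ => neg_add_eq_sub _ _

lemma wstar_eq : wstar g = Uv' g (g - 1) := by
  unfold wstar Uv' Sv Dv
  congr 1
  exact Finset.sum_congr rfl fun k _ => neg_add_eq_sub _ _

lemma U_succ (hg : 3 ≤ g) : Uv g (g - 1) = Uv g (g - 2) + Dv g (g - 2) := by
  unfold Uv Sv
  rw [show g - 1 = (g-2)+1 by omega, Finset.sum_range_succ]
  abel

lemma U'_succ (hg : 3 ≤ g) : Uv' g (g - 1) = Uv' g (g - 2) + Dv g (g - 2) := by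
  unfold Uv' Sv
  rw [show g - 1 = (g-2)+1 by omega, Finset.sum_range_succ]
  abel

/-! #### transvection identities -/

lemma Ttau_apply (v u : Idx g → ℤ) :
    Ttau g v u = u + pairing (OmTau g) v u • v := rfl

lemma Ttau_neg (v : Idx g → ℤ) : Ttau g (-v) = Ttau g v := by
  refine LinearEquiv.ext fun u => ?_
  show u + pairing (OmTau g) (-v) u • (-v) = u + pairing (OmTau g) v u • v
  rw [pairing_neg_left]
  funext x
  simp only [Pi.add_apply, Pi.smul_apply, Pi.neg_apply, smul_eq_mul]
  ring

lemma Ttau_conj (v w : Idx g → ℤ) :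
    Ttau g v * Ttau g w =
      Ttau g (w + pairing (OmTau g) v w • v) * Ttau g v := by
  refine LinearEquiv.ext fun u => ?_
  show Ttau g v (Ttau g w u) =
    Ttau g (w + pairing (OmTau g) v w • v) (Ttau g v u)
  simp only [Ttau_apply]
  simp only [pairing_add, pairing_smul, pairing_add_left, pairing_smul_left]
  rw [pr_self v, pairing_anti (OmTau g) (OmTau_skew g) w v]
  funext x
  simp only [Pi.add_apply, Pi.smul_apply, smul_eq_mul]
  ring

lemma Ttau_sq (v x : Idx g → ℤ) (h : pairing (OmTau g) x v = 0) :
    Ttau g (v + x) * Ttau g (v - x) = (Ttau g v) ^ 2 * (Ttau g x) ^ 2 := by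
  have hvx : pairing (OmTau g) v x = 0 := by
    rw [pairing_anti (OmTau g) (OmTau_skew g), h]; ring
  rw [pow_two, pow_two]
  refine LinearEquiv.ext fun u => ?_
  show Ttau g (v + x) (Ttau g (v - x) u) =
    Ttau g v (Ttau g v (Ttau g x (Ttau g x u)))
  simp only [Ttau_apply]
  simp only [pairing_add, pairing_sub, pairing_add_left, pairing_sub_left,
    pairing_smul, pairing_smul_left]
  rw [pr_self v, pr_self x, h, hvx]
  funext y
  simp only [Pi.add_apply, Pi.sub_apply, Pi.smul_apply, smul_eq_mul]
  ring

/-- if `v` lies in the Ω-closure of the basis, the transvection along `v` lies in the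
subgroup generated by the basis transvections. -/
lemma cl_mem {v : Idx g → ℤ} (h : Cl g v) :
    Ttau g v ∈ Subgroup.closure (Set.range fun c : Idx g => Ttau g (evec g (c : ℕ))) := by
  induction h with
  | base hv =>
      obtain ⟨a, rfl⟩ := hv
      exact Subgroup.subset_closure ⟨a, rfl⟩
  | neg _ ih =>
      rw [Ttau_neg]; exact ih
  | @add v w _ _ hp ihv ihw =>
      have h2 := Ttau_conj (g := g) v w
      rw [hp, one_smul] at h2
      have h3 : Ttau g (v + w) * Ttau g v = Ttau g v * Ttau g w := by
        rw [add_comm v w, ← h2]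
      have h4 : Ttau g (v + w) = Ttau g v * Ttau g w * (Ttau g v)⁻¹ :=
        eq_mul_inv_of_mul_eq h3
      rw [h4]
      exact mul_mem (mul_mem ihv ihw) (inv_mem ihv)
  | @sub v w _ _ hp ihv ihw =>
      have hp' : pairing (OmTau g) w v = -1 := by
        rw [pairing_anti (OmTau g) (OmTau_skew g), hp]
      have h2 := Ttau_conj (g := g) w v
      rw [hp'] at h2
      have h5 : v + (-1 : ℤ) • w = v - w := by
        funext y
        simp only [Pi.add_apply, Pi.sub_apply, Pi.smul_apply, smul_eq_mul]
        ring
      rw [h5] at h2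
      have h4 : Ttau g (v - w) = Ttau g w * Ttau g v * (Ttau g w)⁻¹ :=
        eq_mul_inv_of_mul_eq h2.symm
      rw [h4]
      exact mul_mem (mul_mem ihw ihv) (inv_mem ihw)

end L35

/-- Lemma 3.5 of the paper: if `3g-3 ≡ 3 (mod 6)` then `T_{v*}², T_{w*}²` lie in the
subgroup generated by the transvections along the standard basis vectors, and `v* + w*`
lies in the Ω-closure of the standard basis; if `3g-3 ≡ 0 (mod 6)` then `v*, w*, v* + w*`
all lie in the Ω-closure of the standard basis. -/
theorem statement11 (g : ℕ) (hg : 3 ≤ g) :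
    ((3 * g - 3) % 6 = 3 →
      (Ttau g (vstar g)) ^ 2 ∈
          Subgroup.closure (Set.range fun c : Idx g => Ttau g (evec g (c : ℕ))) ∧
      (Ttau g (wstar g)) ^ 2 ∈
          Subgroup.closure (Set.range fun c : Idx g => Ttau g (evec g (c : ℕ))) ∧
      OmegaClosure (pairing (OmTau g)) (Set.range fun a : Idx g => evec g (a : ℕ))
        (vstar g + wstar g)) ∧
    ((3 * g - 3) % 6 = 0 →
      OmegaClosure (pairing (OmTau g)) (Set.range fun a : Idx g => evec g (a : ℕ))
        (vstar g) ∧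
      OmegaClosure (pairing (OmTau g)) (Set.range fun a : Idx g => evec g (a : ℕ))
        (wstar g) ∧
      OmegaClosure (pairing (OmTau g)) (Set.range fun a : Idx g => evec g (a : ℕ))
        (vstar g + wstar g)) := by
  have h0le : (0:ℕ) ≤ 1 := by norm_num
  have h1le : (1:ℕ) ≤ 1 := le_refl 1
  have hg2 : g - 2 < g - 1 := by omega
  have hg2le : g - 2 ≤ g - 1 := by omega
  have hvw : vstar g + wstar g =
      evec g 0 + evec g 1 + (L35.Sv g (g-1) + L35.Sv g (g-1)) := by
    rw [L35.vstar_eq, L35.wstar_eq]; unfold L35.Uv L35.Uv'; abel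
  have hclvw : L35.Cl g (vstar g + wstar g) := by
    rw [hvw]; exact L35.cl_s hg (g-1) (le_refl _)
  constructor
  · -- even case
    intro h6
    obtain ⟨m, hm⟩ : ∃ m, g - 2 = 2 * m := ⟨(g-2)/2, by omega⟩
    have hU2 : L35.Cl g (L35.Uv g (g-2)) := by
      have := L35.cl_U hg m (by omega)
      rwa [← hm] at this
    have hU2' : L35.Cl g (evec g 0 + L35.Sv g (g-2)) := hU2
    have hU'2 : L35.Cl g (L35.Uv' g (g-2)) := L35.cl_U'_of hg hg2le hU2
    have hU'2' : L35.Cl g (evec g 1 + L35.Sv g (g-2)) := hU'2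
    have hx : L35.Cl g (L35.Dv g (g-2)) := L35.cl_D hg2
    have hp : L35.Cl g (evec g 0 + L35.Sv g (g-2) + (L35.Dv g (g-2) + L35.Dv g (g-2))) :=
      L35.cl_plus2D hg h0le hg2 hU2'
    have hp' : L35.Cl g (evec g 1 + L35.Sv g (g-2) + (L35.Dv g (g-2) + L35.Dv g (g-2))) :=
      L35.cl_plus2D hg h1le hg2 hU'2'
    have hvs : vstar g = evec g 0 + L35.Sv g (g-2) + L35.Dv g (g-2) := by
      rw [L35.vstar_eq, L35.U_succ hg]; unfold L35.Uv; abel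
    have hws : wstar g = evec g 1 + L35.Sv g (g-2) + L35.Dv g (g-2) := by
      rw [L35.wstar_eq, L35.U'_succ hg]; unfold L35.Uv'; abel
    refine ⟨?_, ?_, hclvw⟩
    · -- T_{v*}^2
      have hx0 : pairing (OmTau g) (L35.Dv g (g-2)) (vstar g) = 0 := by
        rw [hvs]
        rw [pairing_add, pairing_add, L35.pr_D_b hg h0le hg2,
          L35.pr_D_S hg2 hg2le, L35.pr_D_D hg2 hg2]
        ring
      have hsq := L35.Ttau_sq (vstar g) (L35.Dv g (g-2)) hx0
      have hv1 : vstar g + L35.Dv g (g-2) =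
          evec g 0 + L35.Sv g (g-2) + (L35.Dv g (g-2) + L35.Dv g (g-2)) := by
        rw [hvs]; abel
      have hv2 : vstar g - L35.Dv g (g-2) = evec g 0 + L35.Sv g (g-2) := by
        rw [hvs]; abel
      rw [hv1, hv2] at hsq
      have hfin : (Ttau g (vstar g)) ^ 2 =
          Ttau g (evec g 0 + L35.Sv g (g-2) + (L35.Dv g (g-2) + L35.Dv g (g-2))) *
            Ttau g (evec g 0 + L35.Sv g (g-2)) * ((Ttau g (L35.Dv g (g-2))) ^ 2)⁻¹ :=
        eq_mul_inv_of_mul_eq hsq.symm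
      rw [hfin]
      exact mul_mem (mul_mem (L35.cl_mem hp) (L35.cl_mem hU2'))
        (inv_mem (pow_mem (L35.cl_mem hx) 2))
    · -- T_{w*}^2
      have hx0 : pairing (OmTau g) (L35.Dv g (g-2)) (wstar g) = 0 := by
        rw [hws]
        rw [pairing_add, pairing_add, L35.pr_D_b hg h1le hg2,
          L35.pr_D_S hg2 hg2le, L35.pr_D_D hg2 hg2]
        ring
      have hsq := L35.Ttau_sq (wstar g) (L35.Dv g (g-2)) hx0
      have hv1 : wstar g + L35.Dv g (g-2) =
          evec g 1 + L35.Sv g (g-2) + (L35.Dv g (g-2) + L35.Dv g (g-2)) := by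
        rw [hws]; abel
      have hv2 : wstar g - L35.Dv g (g-2) = evec g 1 + L35.Sv g (g-2) := by
        rw [hws]; abel
      rw [hv1, hv2] at hsq
      have hfin : (Ttau g (wstar g)) ^ 2 =
          Ttau g (evec g 1 + L35.Sv g (g-2) + (L35.Dv g (g-2) + L35.Dv g (g-2))) *
            Ttau g (evec g 1 + L35.Sv g (g-2)) * ((Ttau g (L35.Dv g (g-2))) ^ 2)⁻¹ :=
        eq_mul_inv_of_mul_eq hsq.symm
      rw [hfin]
      exact mul_mem (mul_mem (L35.cl_mem hp') (L35.cl_mem hU'2'))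
        (inv_mem (pow_mem (L35.cl_mem hx) 2))
  · -- odd case
    intro h0
    obtain ⟨m, hm⟩ : ∃ m, g - 1 = 2 * m := ⟨(g-1)/2, by omega⟩
    have hU : L35.Cl g (L35.Uv g (g-1)) := by
      have := L35.cl_U hg m (by omega)
      rwa [← hm] at this
    refine ⟨?_, ?_, hclvw⟩
    · rw [L35.vstar_eq]; exact hU
    · rw [L35.wstar_eq]; exact L35.cl_U'_of hg (le_refl _) hU
end
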